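/- arXiv:1801.05265 — 3 statements merged into one kernel-verified Lean document; each statement's English description precedes it below -/
import Mathlib

section
/- Let μ be a capacity on a finite set I, let S ⊆ I with μ(S) > 0, and define ν(T) = μ(T)/μ(S) for T ⊆ S, a capacity on 2^S. For a nonnegative vector x : I → ℝ, let x_S : I → ℝ be the vector with x_S = x on S and x_S = 0 on I∖S. Then the Choquet integral of the restriction x|_S with respect to ν satisfies C_ν(x|_S) = C_μ(x_S) / μ(S). -/
/-- The Choquet integral of a vector `x` on a finite ground set `ι` w.r.t. a set
function `μ`, computed from a sorting enumeration `e` of the ground set: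
`∑_{i=1}^{|ι|} (x_{(i)} − x_{(i−1)}) · μ({(i),…,(|ι|)})` with `x_{(0)} := 0`. -/
noncomputable def choquet {ι : Type*} [Fintype ι] [DecidableEq ι]
    (μ : Finset ι → ℝ) (x : ι → ℝ) (e : Fin (Fintype.card ι) ≃ ι) : ℝ :=
  ∑ i : Fin (Fintype.card ι),
    (x (e i) - (if (i : ℕ) = 0 then 0 else
      x (e ⟨(i : ℕ) - 1, Nat.lt_of_le_of_lt (Nat.pred_le _) i.isLt⟩))) *
    μ ((Finset.univ.filter fun j : Fin (Fintype.card ι) => i ≤ j).image fun j => e j)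

open Finset

section aux
variable {ι : Type*} [Fintype ι] [DecidableEq ι]

lemma sorted_values_eq (w : ι → ℝ) (e f : Fin (Fintype.card ι) ≃ ι)
    (he : ∀ a b, a ≤ b → w (e a) ≤ w (e b))
    (hf : ∀ a b, a ≤ b → w (f a) ≤ w (f b)) (i : Fin (Fintype.card ι)) :
    w (e i) = w (f i) := by
  have hperm : List.Perm (List.ofFn fun j => (e j : ι)) (List.ofFn fun j => (f j : ι)) := by
    rw [List.perm_ext_iff_of_nodup (List.nodup_ofFn_ofInjective e.injective)
      (List.nodup_ofFn_ofInjective f.injective)]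
    intro a
    simp [List.mem_ofFn, e.surjective a, f.surjective a]
  have hperm2 : List.Perm (List.ofFn fun j => w (e j)) (List.ofFn fun j => w (f j)) := by
    have := hperm.map w
    simpa [List.map_ofFn, Function.comp_def] using this
  have hs1 : (List.ofFn fun j => w (e j)).Pairwise (· ≤ ·) :=
    List.pairwise_ofFn.mpr fun a b h => he a b h.le
  have hs2 : (List.ofFn fun j => w (f j)).Pairwise (· ≤ ·) :=
    List.pairwise_ofFn.mpr fun a b h => hf a b h.le
  have heq := List.Perm.eq_of_pairwise' hs1 hs2 hperm2
  rw [List.ofFn_inj] at heq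
  exact congrFun heq i

lemma tail_canonical (w : ι → ℝ) (e : Fin (Fintype.card ι) ≃ ι)
    (he : ∀ a b, a ≤ b → w (e a) ≤ w (e b)) (i : Fin (Fintype.card ι))
    (hi : ∀ j, j < i → w (e j) < w (e i)) :
    ((Finset.univ.filter fun j => i ≤ j).image fun j => e j)
      = Finset.univ.filter fun a => w (e i) ≤ w a := by
  ext a
  simp only [mem_image, mem_filter, mem_univ, true_and]
  constructor
  · rintro ⟨j, hij, rfl⟩; exact he i j hij
  · intro h
    refine ⟨e.symm a, ?_, e.apply_symm_apply a⟩
    by_contra hlt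
    push_neg at hlt
    have := hi _ hlt
    rw [e.apply_symm_apply] at this
    exact absurd h (not_le.mpr this)

lemma choquet_sorted_eq (μ : Finset ι → ℝ) (w : ι → ℝ)
    (e f : Fin (Fintype.card ι) ≃ ι)
    (he : ∀ a b, a ≤ b → w (e a) ≤ w (e b))
    (hf : ∀ a b, a ≤ b → w (f a) ≤ w (f b)) :
    choquet μ w e = choquet μ w f := by
  unfold choquet
  refine Finset.sum_congr rfl fun i _ => ?_
  have hv := sorted_values_eq w e f he hf
  by_cases h0 : (i : ℕ) = 0
  · have hfil : (Finset.univ.filter fun j : Fin (Fintype.card ι) => i ≤ j) = Finset.univ := by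
      apply Finset.filter_true_of_mem
      intro j _
      rw [Fin.le_def, h0]
      exact Nat.zero_le _
    rw [hfil, if_pos h0, if_pos h0, hv i,
      Finset.image_univ_of_surjective e.surjective,
      Finset.image_univ_of_surjective f.surjective]
  · have hplt : ((i : ℕ) - 1) < Fintype.card ι := Nat.lt_of_le_of_lt (Nat.pred_le _) i.isLt
    set p : Fin (Fintype.card ι) := ⟨(i : ℕ) - 1, hplt⟩ with hp
    have hpi : p ≤ i := by rw [Fin.le_def]; exact Nat.pred_le _
    rw [if_neg h0, if_neg h0]
    by_cases hle : w (e i) ≤ w (e p)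
    · have heqv : w (e p) = w (e i) := le_antisymm (he p i hpi) hle
      have hz : w (f i) - w (f p) = 0 := by rw [← hv i, ← hv p, heqv, sub_self]
      rw [heqv, sub_self, zero_mul, hz, zero_mul]
    · push_neg at hle
      have hstrict : ∀ j, j < i → w (e j) < w (e i) := by
        intro j hj
        have hjp : j ≤ p := by
          have h' := Fin.lt_def.mp hj
          rw [hp, Fin.le_def]
          show (j : ℕ) ≤ (i : ℕ) - 1
          omega
        exact lt_of_le_of_lt (he j p hjp) hle
      have hstrictf : ∀ j, j < i → w (f j) < w (f i) := by
        intro j hj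
        rw [← hv j, ← hv i]; exact hstrict j hj
      rw [tail_canonical w e he i hstrict, tail_canonical w f hf i hstrictf,
        hv i, ← hv p]

end aux


/-- hierarchical Choquet integral identity: if `ν(T) = μ(T)/μ(S)` for
`T ⊆ S`, then `C_ν(x|_S) = C_μ(x_S)/μ(S)`, where `x_S` agrees with `x` on `S` and is
zero outside `S`. -/
theorem choquet_restriction_identity {I : Type*} [Fintype I] [DecidableEq I]
    (μ : Finset I → ℝ)
    (h0 : μ ∅ = 0) (h1 : μ Finset.univ = 1)
    (hmono : ∀ R S : Finset I, R ⊆ S → μ R ≤ μ S)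
    (S : Finset I) (hS : 0 < μ S)
    (x : I → ℝ) (hx : ∀ i, 0 ≤ x i)
    (e : Fin (Fintype.card {i // i ∈ S}) ≃ {i // i ∈ S})
    (he : ∀ a b, a ≤ b → x (e a) ≤ x (e b))
    (f : Fin (Fintype.card I) ≃ I)
    (hf : ∀ a b, a ≤ b →
      (if (f a : I) ∈ S then x (f a) else 0) ≤ (if (f b : I) ∈ S then x (f b) else 0)) :
    choquet (fun T : Finset {i // i ∈ S} =>
        μ (T.map (Function.Embedding.subtype (· ∈ S))) / μ S)
      (fun i : {i // i ∈ S} => x i) e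
    = choquet μ (fun i : I => if i ∈ S then x i else 0) f / μ S := by
  classical
  set w : I → ℝ := fun i => if i ∈ S then x i else 0 with hw
  have hwf : ∀ a b, a ≤ b → w (f a) ≤ w (f b) := hf
  have hwnn : ∀ i, 0 ≤ w i := fun i => by
    by_cases h : i ∈ S <;> simp [hw, h, hx i]
  let m := Fintype.card {i // ¬ i ∈ S}
  have hcard : m + Fintype.card {i // i ∈ S} = Fintype.card I := by
    rw [← Fintype.card_sum]
    exact Fintype.card_congr ((Equiv.sumComm _ _).trans (Equiv.sumCompl (· ∈ S)))
  let gc : Fin m ≃ {i // ¬ i ∈ S} := (Fintype.equivFin _).symm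
  let φ : Fin m ⊕ Fin (Fintype.card {i // i ∈ S}) ≃ Fin (Fintype.card I) :=
    finSumFinEquiv.trans (finCongr hcard)
  let f' : Fin (Fintype.card I) ≃ I :=
    φ.symm.trans ((Equiv.sumCongr gc e).trans
      ((Equiv.sumComm _ _).trans (Equiv.sumCompl (· ∈ S))))
  have hφl : ∀ a : Fin m, ((φ (Sum.inl a)) : ℕ) = (a : ℕ) := by
    intro a; simp [φ]
  have hφr : ∀ b, ((φ (Sum.inr b)) : ℕ) = m + (b : ℕ) := by
    intro b; simp [φ]
  have hf'l : ∀ a : Fin m, f' (φ (Sum.inl a)) = ↑(gc a) := by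
    intro a; simp [f']
  have hf'r : ∀ b, f' (φ (Sum.inr b)) = ↑(e b) := by
    intro b; simp [f']
  have keyL : ∀ k : Fin (Fintype.card I), ((k : ℕ) < m) → w (f' k) = 0 := by
    intro k hk
    have hkeq : k = φ (Sum.inl ⟨(k : ℕ), hk⟩) := Fin.ext (by rw [hφl])
    rw [hkeq, hf'l]
    exact if_neg (gc ⟨(k : ℕ), hk⟩).2
  have keyR : ∀ (k : Fin (Fintype.card I)) (hk : m ≤ (k : ℕ)),
      f' k = ↑(e ⟨(k : ℕ) - m, by have := k.isLt; omega⟩) := by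
    intro k hk
    have hkeq : k = φ (Sum.inr ⟨(k : ℕ) - m, by have := k.isLt; omega⟩) :=
      Fin.ext (by rw [hφr]; show (k : ℕ) = m + ((k : ℕ) - m); omega)
    conv_lhs => rw [hkeq]
    exact hf'r _
  have keyRw : ∀ (k : Fin (Fintype.card I)) (hk : m ≤ (k : ℕ)),
      w (f' k) = x ↑(e ⟨(k : ℕ) - m, by have := k.isLt; omega⟩) := by
    intro k hk
    rw [keyR k hk]
    exact if_pos (e _).2
  have hwf' : ∀ a b, a ≤ b → w (f' a) ≤ w (f' b) := by
    intro a b hab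
    by_cases ha : (a : ℕ) < m
    · rw [keyL a ha]; exact hwnn _
    · push_neg at ha
      have hb : m ≤ (b : ℕ) := le_trans ha hab
      rw [keyRw a ha, keyRw b hb]
      refine he _ _ ?_
      rw [Fin.mk_le_mk]
      have := Fin.le_def.mp hab
      omega
  have hinv : choquet μ w f' = choquet μ w f := choquet_sorted_eq μ w f' f hwf' hwf
  rw [eq_div_iff (ne_of_gt hS), ← hinv]
  show (∑ b : Fin (Fintype.card {i // i ∈ S}),
      (x ↑(e b) - (if (b : ℕ) = 0 then 0 else
        x ↑(e ⟨(b : ℕ) - 1, Nat.lt_of_le_of_lt (Nat.pred_le _) b.isLt⟩))) *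
      (μ (((Finset.univ.filter fun j => b ≤ j).image fun j => e j).map
        (Function.Embedding.subtype (· ∈ S))) / μ S)) * μ S
    = ∑ k : Fin (Fintype.card I),
      (w (f' k) - (if (k : ℕ) = 0 then 0 else
        w (f' ⟨(k : ℕ) - 1, Nat.lt_of_le_of_lt (Nat.pred_le _) k.isLt⟩))) *
      μ ((Finset.univ.filter fun j => k ≤ j).image fun j => f' j)
  rw [← Equiv.sum_comp φ, Fintype.sum_sum_type, Finset.sum_mul]
  have hL : ∀ a : Fin m,
      (w (f' (φ (Sum.inl a))) - (if ((φ (Sum.inl a) : ℕ)) = 0 then 0 else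
        w (f' ⟨(φ (Sum.inl a) : ℕ) - 1,
          Nat.lt_of_le_of_lt (Nat.pred_le _) (φ (Sum.inl a)).isLt⟩))) *
      μ ((Finset.univ.filter fun j => φ (Sum.inl a) ≤ j).image fun j => f' j) = 0 := by
    intro a
    have hk : ((φ (Sum.inl a) : ℕ)) < m := by rw [hφl]; exact a.isLt
    rw [keyL _ hk]
    by_cases h0' : ((φ (Sum.inl a) : ℕ)) = 0
    · rw [if_pos h0', sub_self, zero_mul]
    · rw [if_neg h0', keyL _ (by show ((φ (Sum.inl a) : ℕ)) - 1 < m; omega),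
        sub_self, zero_mul]
  rw [Finset.sum_eq_zero fun a _ => hL a, zero_add]
  refine Finset.sum_congr rfl fun b _ => ?_
  have hkval : ((φ (Sum.inr b) : ℕ)) = m + (b : ℕ) := hφr b
  have hkm : m ≤ ((φ (Sum.inr b) : ℕ)) := by omega
  have hval : w (f' (φ (Sum.inr b))) = x ↑(e b) := by
    rw [keyRw _ hkm]
    exact congrArg (fun z => x ↑(e z)) (by
      apply Fin.ext
      show ((φ (Sum.inr b) : ℕ)) - m = (b : ℕ)
      omega)
  have hprev : (if ((φ (Sum.inr b) : ℕ)) = 0 then 0 else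
      w (f' ⟨(φ (Sum.inr b) : ℕ) - 1,
        Nat.lt_of_le_of_lt (Nat.pred_le _) (φ (Sum.inr b)).isLt⟩))
      = (if (b : ℕ) = 0 then (0:ℝ) else
        x ↑(e ⟨(b : ℕ) - 1, Nat.lt_of_le_of_lt (Nat.pred_le _) b.isLt⟩)) := by
    by_cases hb0 : (b : ℕ) = 0
    · rw [if_pos hb0]
      by_cases hm0 : ((φ (Sum.inr b) : ℕ)) = 0
      · rw [if_pos hm0]
      · rw [if_neg hm0, keyL _ (by show ((φ (Sum.inr b) : ℕ)) - 1 < m; omega)]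
    · have hne : ((φ (Sum.inr b) : ℕ)) ≠ 0 := by omega
      rw [if_neg hb0, if_neg hne,
        keyRw _ (by show m ≤ ((φ (Sum.inr b) : ℕ)) - 1; omega)]
      exact congrArg (fun z => x ↑(e z)) (by
        apply Fin.ext
        show ((φ (Sum.inr b) : ℕ)) - 1 - m = (b : ℕ) - 1
        omega)
  have hset : ((Finset.univ.filter fun j => φ (Sum.inr b) ≤ j).image fun j => f' j)
      = ((Finset.univ.filter fun j => b ≤ j).image fun j => e j).map
        (Function.Embedding.subtype (· ∈ S)) := by
    ext i
    simp only [Finset.mem_image, Finset.mem_filter, Finset.mem_univ, true_and,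
      Finset.mem_map, Function.Embedding.coe_subtype]
    constructor
    · rintro ⟨j, hbj, rfl⟩
      have hjm : m ≤ (j : ℕ) := by
        have := Fin.le_def.mp hbj; omega
      refine ⟨e ⟨(j : ℕ) - m, by have := j.isLt; omega⟩,
        ⟨⟨(j : ℕ) - m, by have := j.isLt; omega⟩, ?_, rfl⟩, (keyR j hjm).symm⟩
      rw [Fin.le_def]
      have := Fin.le_def.mp hbj
      show (b : ℕ) ≤ (j : ℕ) - m
      omega
    · rintro ⟨t, ⟨j', hbj', rfl⟩, rfl⟩
      refine ⟨φ (Sum.inr j'), ?_, hf'r j'⟩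
      rw [Fin.le_def, hkval, hφr]
      have := Fin.le_def.mp hbj'
      omega
  rw [hval, hprev, hset, mul_assoc, div_mul_cancel₀ _ (ne_of_gt hS)]
end

section
/- Let I be a finite set, m : 2^I → ℝ a 2-additive Möbius measure (m(∅)=0 and m(T)=0 for |T|>2) inducing the capacity μ(S) = Σ_{R⊆S} m(R), let W be a finite index set and E : W → 2^I assign pairwise disjoint sets of elementary criteria with S := ⋃_{w∈W} E(w) and μ(S) > 0, and let μ_r be the induced capacity on 2^W given by μ_r(F) = μ(⋃_{w∈F} E(w))/μ(S). Then for every w ∈ W, the Shapley value of w with respect to μ_r equals [ Σ_{t ∈ E(w)} m({t}) + Σ_{{t_1,t_2} ⊆ E(w)} m({t_1,t_2}) + (1/2) Σ_{t_1 ∈ E(w), t_2 ∈ S∖E(w)} m({t_1,t_2}) ] / μ(S). -/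
/-- The Shapley value of an element `w` with respect to a set function `ν` on the
power set of the finite set `W`:
`∑_{T ⊆ W∖{w}} [(|W∖T|−1)! |T|! / |W|!] (ν(T∪{w}) − ν(T))`. -/
noncomputable def shapley {W : Type*} [Fintype W] [DecidableEq W]
    (ν : Finset W → ℝ) (w : W) : ℝ :=
  ∑ T ∈ (Finset.univ.erase w).powerset,
    (((Finset.univ \ T).card - 1).factorial * T.card.factorial : ℝ)
      / ((Fintype.card W).factorial : ℝ) * (ν (insert w T) - ν T)


lemma lemA {W : Type*} [DecidableEq W] (U : Finset W) :
    ∑ T ∈ U.powerset, (U.card - T.card).factorial * T.card.factorial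
      = (U.card + 1).factorial := by
  rw [Finset.sum_powerset]
  have h1 : ∀ j ∈ Finset.range (U.card + 1),
      (∑ T ∈ U.powersetCard j, (U.card - T.card).factorial * T.card.factorial)
        = U.card.factorial := by
    intro j hj
    have hj' : j ≤ U.card := Nat.lt_succ_iff.mp (Finset.mem_range.mp hj)
    have : ∀ T ∈ U.powersetCard j,
        (U.card - T.card).factorial * T.card.factorial
          = (U.card - j).factorial * j.factorial := by
      intro T hT
      rw [(Finset.mem_powersetCard.mp hT).2]
    rw [Finset.sum_congr rfl this, Finset.sum_const, Finset.card_powersetCard,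
      smul_eq_mul]
    rw [← Nat.choose_mul_factorial_mul_factorial hj']
    ring
  rw [Finset.sum_congr rfl h1, Finset.sum_const, Finset.card_range, smul_eq_mul,
    Nat.factorial_succ]

lemma gauss (k : ℕ) : 2 * ∑ j ∈ Finset.range (k + 1), (j + 1) = (k + 1) * (k + 2) := by
  induction k with
  | zero => simp
  | succ k ih => rw [Finset.sum_range_succ, Nat.mul_add, ih]; ring

-- combinatorial lemma B
lemma lemB {W : Type*} [DecidableEq W] (U : Finset W) :
    2 * ∑ R ∈ U.powerset, (U.card - R.card).factorial * (R.card + 1).factorial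
      = (U.card + 2).factorial := by
  rw [Finset.sum_powerset]
  have h1 : ∀ j ∈ Finset.range (U.card + 1),
      (∑ R ∈ U.powersetCard j, (U.card - R.card).factorial * (R.card + 1).factorial)
        = (j + 1) * U.card.factorial := by
    intro j hj
    have hj' : j ≤ U.card := Nat.lt_succ_iff.mp (Finset.mem_range.mp hj)
    have : ∀ T ∈ U.powersetCard j,
        (U.card - T.card).factorial * (T.card + 1).factorial
          = (U.card - j).factorial * (j + 1).factorial := by
      intro T hT
      rw [(Finset.mem_powersetCard.mp hT).2]
    rw [Finset.sum_congr rfl this, Finset.sum_const, Finset.card_powersetCard,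
      smul_eq_mul]
    rw [← Nat.choose_mul_factorial_mul_factorial hj', Nat.factorial_succ]
    ring
  rw [Finset.sum_congr rfl h1, ← Finset.sum_mul, ← Nat.mul_assoc, gauss]
  rw [Nat.factorial_succ, Nat.factorial_succ]
  ring

lemma oneSum {W : Type*} [DecidableEq W] (U : Finset W) :
    ∑ T ∈ U.powerset,
      (((U.card - T.card).factorial * T.card.factorial : ℝ)
        / ((U.card + 1).factorial : ℝ)) = 1 := by
  rw [← Finset.sum_div]
  have h := congrArg (Nat.cast : ℕ → ℝ) (lemA U)
  push_cast at h
  rw [h, div_self]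
  exact_mod_cast Nat.factorial_ne_zero _

lemma halfSum {W : Type*} [DecidableEq W] (U : Finset W) (w' : W) (hw' : w' ∈ U) :
    ∑ T ∈ U.powerset,
      (if w' ∈ T then
        (((U.card - T.card).factorial * T.card.factorial : ℝ)
          / ((U.card + 1).factorial : ℝ)) else 0) = 1 / 2 := by
  obtain ⟨U', hU', rfl⟩ : ∃ U', w' ∉ U' ∧ insert w' U' = U :=
    ⟨U.erase w', Finset.notMem_erase _ _, Finset.insert_erase hw'⟩
  rw [Finset.sum_powerset_insert hU']
  have hz : ∑ T ∈ U'.powerset,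
      (if w' ∈ T then
        ((((insert w' U').card - T.card).factorial * T.card.factorial : ℝ)
          / (((insert w' U').card + 1).factorial : ℝ)) else 0) = 0 := by
    apply Finset.sum_eq_zero
    intro T hT
    rw [if_neg (fun h => hU' (Finset.mem_powerset.mp hT h))]
  rw [hz, zero_add]
  have hc : ∀ R ∈ U'.powerset,
      (if w' ∈ insert w' R then
        ((((insert w' U').card - (insert w' R).card).factorial
            * (insert w' R).card.factorial : ℝ)
          / (((insert w' U').card + 1).factorial : ℝ)) else 0)
        = ((U'.card - R.card).factorial * (R.card + 1).factorial : ℝ)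
            / ((U'.card + 2).factorial : ℝ) := by
    intro R hR
    have hw'R : w' ∉ R := fun h => hU' (Finset.mem_powerset.mp hR h)
    rw [if_pos (Finset.mem_insert_self w' R),
      Finset.card_insert_of_notMem hU', Finset.card_insert_of_notMem hw'R,
      Nat.succ_sub_succ]
  rw [Finset.sum_congr rfl hc, ← Finset.sum_div]
  have h := congrArg (Nat.cast : ℕ → ℝ) (lemB U')
  push_cast at h
  rw [div_eq_div_iff]
  · linarith
  · exact_mod_cast Nat.factorial_ne_zero _
  · norm_num


section
variable {I : Type*} [DecidableEq I]
variable (m : Finset I → ℝ) (hm0 : m ∅ = 0)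
  (h2add : ∀ T : Finset I, 2 < T.card → m T = 0)
  (μ : Finset I → ℝ) (hμ : ∀ S : Finset I, μ S = ∑ R ∈ S.powerset, m R)

include h2add in
lemma key1 (b : I) (C : Finset I) (hb : b ∉ C) :
    ∑ R ∈ C.powerset, m (insert b R) = m {b} + ∑ t ∈ C, m {b, t} := by
  induction C using Finset.induction_on with
  | empty => simp
  | insert _ _ hc ih =>
      rename_i c C'
      have hbc : b ≠ c := by intro h; exact hb (h ▸ Finset.mem_insert_self c C')
      have hbC' : b ∉ C' := fun h => hb (Finset.mem_insert_of_mem h)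
      rw [Finset.sum_powerset_insert hc, ih hbC']
      have h2 : ∑ R ∈ C'.powerset, m (insert b (insert c R)) = m {b, c} := by
        rw [Finset.sum_eq_single_of_mem ∅ (Finset.empty_mem_powerset C')]
        · simp
        · intro R hR hRne
          have hcR : c ∉ R := fun h => hc (Finset.mem_powerset.mp hR h)
          have hbR : b ∉ insert c R := by
            simp only [Finset.mem_insert]
            rintro (h | h)
            · exact hbc h
            · exact hbC' (Finset.mem_powerset.mp hR h)
          apply h2add
          rw [Finset.card_insert_of_notMem hbR, Finset.card_insert_of_notMem hcR]
          have := Finset.card_pos.mpr (Finset.nonempty_of_ne_empty hRne)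
          omega
      rw [h2, Finset.sum_insert hc]
      ring

include h2add hμ in
lemma key2 (b : I) (C : Finset I) (hb : b ∉ C) :
    μ (insert b C) = μ C + m {b} + ∑ t ∈ C, m {b, t} := by
  rw [hμ, hμ, Finset.sum_powerset_insert hb, key1 m h2add b C hb]
  ring

include hm0 h2add hμ in
lemma muStar (A B : Finset I) (hAB : Disjoint A B) :
    μ (A ∪ B) = μ A + μ B + ∑ t₁ ∈ A, ∑ t₂ ∈ B, m {t₁, t₂} := by
  induction A using Finset.induction_on with
  | empty => simp [hμ, hm0]
  | insert _ _ ha ih =>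
      rename_i a A'
      have haB : a ∉ B := Finset.disjoint_left.mp hAB (Finset.mem_insert_self a A')
      have hA'B : Disjoint A' B :=
        hAB.mono_left (Finset.subset_insert a A')
      have haA'B : a ∉ A' ∪ B := by
        simp only [Finset.mem_union]; rintro (h | h); exacts [ha h, haB h]
      rw [Finset.insert_union, key2 m h2add μ hμ a (A' ∪ B) haA'B, ih hA'B,
        key2 m h2add μ hμ a A' ha, Finset.sum_insert ha,
        Finset.sum_union (Finset.disjoint_left.mpr (fun t ht ht' =>
          (Finset.disjoint_left.mp hA'B ht ht')))]
      ring

include hm0 h2add hμ in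
lemma muEq (A : Finset I) :
    μ A = (∑ t ∈ A, m {t})
      + ∑ T ∈ A.powerset.filter (fun T => T.card = 2), m T := by
  induction A using Finset.induction_on with
  | empty => simp [hμ, hm0, Finset.filter_singleton]
  | insert _ _ ha ih =>
      rename_i a A'
      rw [key2 m h2add μ hμ a A' ha, ih, Finset.sum_insert ha]
      have hpair : ∑ T ∈ (insert a A').powerset.filter (fun T => T.card = 2), m T
          = (∑ T ∈ A'.powerset.filter (fun T => T.card = 2), m T)
            + ∑ t ∈ A', m {a, t} := by
        rw [Finset.sum_filter, Finset.sum_filter, Finset.sum_powerset_insert ha]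
        congr 1
        have : ∀ R ∈ A'.powerset,
            (if (insert a R).card = 2 then m (insert a R) else 0)
              = (if R.card = 1 then m (insert a R) else 0) := by
          intro R hR
          have haR : a ∉ R := fun h => ha (Finset.mem_powerset.mp hR h)
          rw [Finset.card_insert_of_notMem haR]
          congr 1
          simp only [eq_iff_iff]
          omega
        rw [Finset.sum_congr rfl this, ← Finset.sum_filter,
          ← Finset.powersetCard_eq_filter, Finset.powersetCard_one,
          Finset.sum_map]
        rfl
      rw [hpair]
      ring

end


/-- for a 2-additive Möbius measure `m` inducing the capacity `μ`, the
Shapley value of a subcriterion `w` w.r.t. the induced hierarchical capacity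
`μ_r(F) = μ(⋃_{w∈F} E(w))/μ(S)` (with `S = ⋃_{w∈W} E(w)`) equals
`[ ∑_{t∈E(w)} m({t}) + ∑_{{t₁,t₂}⊆E(w)} m({t₁,t₂})
   + (1/2)∑_{t₁∈E(w), t₂∈S∖E(w)} m({t₁,t₂}) ] / μ(S)`. -/
theorem shapley_hierarchical_two_additive {I W : Type*}
    [Fintype I] [DecidableEq I] [Fintype W] [DecidableEq W]
    (m : Finset I → ℝ)
    (hm0 : m ∅ = 0)
    (h2add : ∀ T : Finset I, 2 < T.card → m T = 0)
    (μ : Finset I → ℝ)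
    (hμ : ∀ S : Finset I, μ S = ∑ R ∈ S.powerset, m R)
    (h1 : μ Finset.univ = 1)
    (hmono : ∀ R S : Finset I, R ⊆ S → μ R ≤ μ S)
    (E : W → Finset I)
    (hdisj : ∀ w w' : W, w ≠ w' → Disjoint (E w) (E w'))
    (hpos : 0 < μ (Finset.univ.biUnion E))
    (w : W) :
    shapley (fun F : Finset W => μ (F.biUnion E) / μ (Finset.univ.biUnion E)) w
      = ((∑ t ∈ E w, m {t})
          + (∑ T ∈ (E w).powerset.filter (fun T => T.card = 2), m T)
          + (1 / 2) * ∑ t₁ ∈ E w, ∑ t₂ ∈ (Finset.univ.biUnion E) \ E w, m {t₁, t₂})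
        / μ (Finset.univ.biUnion E) := by
  classical
  set S : Finset I := Finset.univ.biUnion E with hSdef
  set U : Finset W := (Finset.univ : Finset W).erase w with hUdef
  have hwU : w ∉ U := Finset.notMem_erase w _
  have hUcard : U.card + 1 = Fintype.card W := by
    have h0 : 0 < Fintype.card W := Fintype.card_pos_iff.mpr ⟨w⟩
    rw [hUdef, Finset.card_erase_of_mem (Finset.mem_univ w), Finset.card_univ]
    omega
  set c : Finset W → ℝ := fun T =>
    ((U.card - T.card).factorial * T.card.factorial : ℝ)
      / ((U.card + 1).factorial : ℝ) with hcdef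
  set B : W → ℝ := fun w' => ∑ t₁ ∈ E w, ∑ t₂ ∈ E w', m {t₁, t₂} with hBdef
  have hstep : shapley (fun F : Finset W => μ (F.biUnion E) / μ S) w
      = ∑ T ∈ U.powerset,
          c T * ((μ (E w) + ∑ w' ∈ U, (if w' ∈ T then B w' else 0)) / μ S) := by
    unfold shapley
    apply Finset.sum_congr rfl
    intro T hT
    have hTU : T ⊆ U := Finset.mem_powerset.mp hT
    have hwT : w ∉ T := fun h => hwU (hTU h)
    have hco : (((Finset.univ \ T).card - 1).factorial * T.card.factorial : ℝ)
        / ((Fintype.card W).factorial : ℝ) = c T := by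
      have hTle : T.card ≤ U.card := Finset.card_le_card hTU
      have h1' : (Finset.univ \ T).card - 1 = U.card - T.card := by
        rw [Finset.card_sdiff_of_subset (Finset.subset_univ T), Finset.card_univ]
        omega
      rw [hcdef]
      simp only
      rw [h1', hUcard]
    rw [hco]
    congr 1
    have hdisjT : Disjoint (E w) (T.biUnion E) :=
      (Finset.disjoint_biUnion_right _ _ _).mpr
        (fun w' hw' => hdisj w w' (fun h => hwT (h ▸ hw')))
    have hPT : (∑ w' ∈ U, (if w' ∈ T then B w' else 0))
        = ∑ t₁ ∈ E w, ∑ t₂ ∈ T.biUnion E, m {t₁, t₂} := by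
      rw [Finset.sum_ite_mem, Finset.inter_eq_right.mpr hTU, hBdef]
      rw [Finset.sum_comm]
      apply Finset.sum_congr rfl
      intro t₁ _
      rw [Finset.sum_biUnion (fun x _ y _ hxy => hdisj x y hxy)]
    simp only
    rw [Finset.biUnion_insert, div_sub_div_same]
    congr 1
    rw [muStar m hm0 h2add μ hμ (E w) (T.biUnion E) hdisjT, hPT]
    ring
  rw [hstep]
  simp_rw [← mul_div_assoc]
  rw [← Finset.sum_div]
  congr 1
  have hone : ∑ T ∈ U.powerset, c T = 1 := oneSum U
  have hexp : ∑ T ∈ U.powerset,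
      c T * (μ (E w) + ∑ w' ∈ U, (if w' ∈ T then B w' else 0))
      = μ (E w) * ∑ T ∈ U.powerset, c T
        + ∑ w' ∈ U, (∑ T ∈ U.powerset, if w' ∈ T then c T else 0) * B w' := by
    simp only [mul_add]
    rw [Finset.sum_add_distrib]
    congr 1
    · rw [← Finset.sum_mul, mul_comm]
    · simp_rw [Finset.mul_sum]
      rw [Finset.sum_comm]
      apply Finset.sum_congr rfl
      intro w' _
      rw [Finset.sum_mul]
      apply Finset.sum_congr rfl
      intro T _
      split <;> simp
  rw [hexp, hone]
  have hhalf : ∀ w' ∈ U, (∑ T ∈ U.powerset, if w' ∈ T then c T else 0) = 1 / 2 :=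
    fun w' hw' => halfSum U w' hw'
  rw [Finset.sum_congr rfl (fun w' hw' => by rw [hhalf w' hw'])]
  have hSsplit : S = E w ∪ U.biUnion E := by
    rw [hSdef, hUdef]
    conv_lhs => rw [← Finset.insert_erase (Finset.mem_univ w)]
    rw [Finset.biUnion_insert]
  have hdisjU : Disjoint (E w) (U.biUnion E) :=
    (Finset.disjoint_biUnion_right _ _ _).mpr
      (fun w' hw' => hdisj w w' (fun h => hwU (h ▸ hw')))
  have hSd : S \ E w = U.biUnion E := by
    rw [hSsplit, Finset.union_sdiff_cancel_left hdisjU]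
  have hB : ∑ w' ∈ U, B w' = ∑ t₁ ∈ E w, ∑ t₂ ∈ S \ E w, m {t₁, t₂} := by
    rw [hSd, hBdef, Finset.sum_comm]
    apply Finset.sum_congr rfl
    intro t₁ _
    rw [Finset.sum_biUnion (fun x _ y _ hxy => hdisj x y hxy)]
  rw [muEq m hm0 h2add μ hμ (E w)]
  simp_rw [fun w' => (by ring : (1 / 2 : ℝ) * B w' = B w' * (1/2))]
  rw [← Finset.sum_mul, hB]
  ring
end

section
/- Let I be a finite set, m : 2^I → ℝ a 2-additive Möbius measure (m(∅)=0 and m(T)=0 for |T|>2) inducing the capacity μ(S) = Σ_{R⊆S} m(R), let W be a finite index set and E : W → 2^I assign pairwise disjoint sets of elementary criteria with S := ⋃_{w∈W} E(w) and μ(S) > 0, and let μ_r be the induced capacity on 2^W given by μ_r(F) = μ(⋃_{w∈F} E(w))/μ(S). Then for all distinct w_1, w_2 ∈ W, the interaction index of {w_1, w_2} with respect to μ_r equals [ Σ_{t_1 ∈ E(w_1), t_2 ∈ E(w_2)} m({t_1,t_2}) ] / μ(S). -/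
/-- The interaction index of a pair of distinct elements `w₁, w₂` with respect to a set
function `ν` on the power set of the finite set `W`:
`∑_{T ⊆ W∖{w₁,w₂}} [(|W∖T|−2)! |T|! / (|W|−1)!]
  (ν(T∪{w₁,w₂}) − ν(T∪{w₁}) − ν(T∪{w₂}) + ν(T))`. -/
noncomputable def interactionIndex {W : Type*} [Fintype W] [DecidableEq W]
    (ν : Finset W → ℝ) (w₁ w₂ : W) : ℝ :=
  ∑ T ∈ ((Finset.univ.erase w₁).erase w₂).powerset,
    (((Finset.univ \ T).card - 2).factorial * T.card.factorial : ℝ)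
      / ((Fintype.card W - 1).factorial : ℝ)
      * (ν (insert w₁ (insert w₂ T)) - ν (insert w₁ T) - ν (insert w₂ T) + ν T)


open Finset

lemma key_diff {I : Type*} [DecidableEq I] (m : Finset I → ℝ)
    (h2add : ∀ T : Finset I, 2 < T.card → m T = 0)
    (A B U : Finset I) (hAB : Disjoint A B) (hAU : Disjoint A U) (hBU : Disjoint B U) :
    (∑ R ∈ (A ∪ B ∪ U).powerset, m R) - (∑ R ∈ (A ∪ U).powerset, m R)
      - (∑ R ∈ (B ∪ U).powerset, m R) + (∑ R ∈ U.powerset, m R)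
    = ∑ t₁ ∈ A, ∑ t₂ ∈ B, m {t₁, t₂} := by
  have hIntSets : (A ∪ U) ∩ (B ∪ U) = U := by
    ext x
    simp only [mem_inter, mem_union]
    constructor
    · rintro ⟨ha | hu, hb | hu'⟩
      · exact absurd hb (disjoint_left.mp hAB ha)
      · exact hu'
      · exact hu
      · exact hu
    · intro h; exact ⟨Or.inr h, Or.inr h⟩
  have hPowInt : (A ∪ U).powerset ∩ (B ∪ U).powerset = U.powerset := by
    ext R
    simp only [mem_inter, mem_powerset]
    rw [← subset_inter_iff, hIntSets]
  have hUnionSub : (A ∪ U).powerset ∪ (B ∪ U).powerset ⊆ (A ∪ B ∪ U).powerset := by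
    intro R hR
    rcases mem_union.mp hR with h | h <;> rw [mem_powerset] at h ⊢
    · exact h.trans (union_subset_union (subset_union_left) (subset_refl U))
    · exact h.trans (union_subset_union (subset_union_right) (subset_refl U))
  have hsum_union : (∑ R ∈ (A ∪ U).powerset ∪ (B ∪ U).powerset, m R)
      + ∑ R ∈ U.powerset, m R
      = (∑ R ∈ (A ∪ U).powerset, m R) + ∑ R ∈ (B ∪ U).powerset, m R := by
    rw [← hPowInt]; exact sum_union_inter
  have hsplit : (∑ R ∈ (A ∪ B ∪ U).powerset \ ((A ∪ U).powerset ∪ (B ∪ U).powerset), m R)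
      + ∑ R ∈ (A ∪ U).powerset ∪ (B ∪ U).powerset, m R
      = ∑ R ∈ (A ∪ B ∪ U).powerset, m R := sum_sdiff hUnionSub
  set D := (A ∪ B ∪ U).powerset \ ((A ∪ U).powerset ∪ (B ∪ U).powerset) with hD
  have hmemD : ∀ R, R ∈ D ↔ R ⊆ A ∪ B ∪ U ∧ ¬ R ⊆ A ∪ U ∧ ¬ R ⊆ B ∪ U := by
    intro R
    simp only [hD, mem_sdiff, Finset.mem_union, mem_powerset, not_or]
  -- the image of pairs
  have hinj : Set.InjOn (fun p : I × I => ({p.1, p.2} : Finset I)) (A ×ˢ B) := by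
    rintro ⟨a, b⟩ hab ⟨a', b'⟩ hab' h
    simp only [coe_product, Set.mem_prod, mem_coe] at hab hab'
    simp only [Prod.mk.injEq]
    replace h : ({a, b} : Finset I) = {a', b'} := h
    have ha : a ∈ ({a', b'} : Finset I) := by rw [← h]; simp
    have hb : b ∈ ({a', b'} : Finset I) := by rw [← h]; simp
    have ha' : a' ∈ ({a, b} : Finset I) := by rw [h]; simp
    have hb' : b' ∈ ({a, b} : Finset I) := by rw [h]; simp
    simp only [mem_insert, mem_singleton] at ha hb ha' hb'
    constructor
    · rcases ha with h1 | h1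
      · exact h1
      · exact ((disjoint_left.mp hAB (h1 ▸ hab.1)) hab'.2).elim
    · rcases hb with h1 | h1
      · exact ((disjoint_right.mp hAB (h1 ▸ hab.2)) hab'.1).elim
      · exact h1
  have himg : (A ×ˢ B).image (fun p : I × I => ({p.1, p.2} : Finset I)) ⊆ D := by
    intro R hR
    rcases mem_image.mp hR with ⟨⟨a, b⟩, hab, rfl⟩
    rcases mem_product.mp hab with ⟨ha, hb⟩
    rw [hmemD]
    refine ⟨?_, ?_, ?_⟩
    · intro x hx
      simp only [mem_insert, mem_singleton] at hx
      rcases hx with rfl | rfl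
      · exact mem_union_left _ (mem_union_left _ ha)
      · exact mem_union_left _ (mem_union_right _ hb)
    · intro hsub
      have := hsub (by simp : b ∈ ({a, b} : Finset I))
      rcases mem_union.mp this with h | h
      · exact disjoint_right.mp hAB hb h
      · exact disjoint_left.mp hBU hb h
    · intro hsub
      have := hsub (by simp : a ∈ ({a, b} : Finset I))
      rcases mem_union.mp this with h | h
      · exact disjoint_left.mp hAB ha h
      · exact disjoint_left.mp hAU ha h
  have hzero : ∀ R ∈ D, R ∉ (A ×ˢ B).image (fun p : I × I => ({p.1, p.2} : Finset I)) →
      m R = 0 := by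
    intro R hR hnotimg
    rw [hmemD] at hR
    obtain ⟨hsub, hnA, hnB⟩ := hR
    obtain ⟨b, hbR, hbn⟩ := not_subset.mp hnA
    obtain ⟨a, haR, han⟩ := not_subset.mp hnB
    have hbB : b ∈ B := by
      rcases mem_union.mp (hsub hbR) with h | h
      · rcases mem_union.mp h with h' | h'
        · exact absurd (mem_union_left _ h') hbn
        · exact h'
      · exact absurd (mem_union_right _ h) hbn
    have haA : a ∈ A := by
      rcases mem_union.mp (hsub haR) with h | h
      · rcases mem_union.mp h with h' | h'
        · exact h'
        · exact absurd (mem_union_left _ h') han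
      · exact absurd (mem_union_right _ h) han
    have hpairsub : ({a, b} : Finset I) ⊆ R := by
      intro x hx
      simp only [mem_insert, mem_singleton] at hx
      rcases hx with rfl | rfl
      · exact haR
      · exact hbR
    have hne : R ≠ ({a, b} : Finset I) := by
      rintro rfl
      exact hnotimg (mem_image.mpr ⟨(a, b), mem_product.mpr ⟨haA, hbB⟩, rfl⟩)
    have hab : a ≠ b := fun h => disjoint_left.mp hAB haA (h ▸ hbB)
    have hcard2 : ({a, b} : Finset I).card = 2 := card_pair hab
    have : 2 < R.card := by
      have hlt : ({a, b} : Finset I) ⊂ R := Finset.ssubset_iff_subset_ne.mpr ⟨hpairsub, (Ne.symm hne)⟩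
      have := Finset.card_lt_card hlt
      omega
    exact h2add R this
  have hDsum : ∑ R ∈ D, m R = ∑ t₁ ∈ A, ∑ t₂ ∈ B, m {t₁, t₂} := by
    rw [← sum_subset himg hzero, sum_image (fun p hp q hq h => hinj (by simpa using hp) (by simpa using hq) h)]
    rw [← sum_product']
  linarith [hsum_union, hsplit, hDsum]

lemma coeff_sum {W : Type*} [Fintype W] [DecidableEq W] (w₁ w₂ : W) (hw : w₁ ≠ w₂) :
    ∑ T ∈ ((Finset.univ.erase w₁).erase w₂).powerset,
      (((Finset.univ \ T).card - 2).factorial * T.card.factorial : ℝ)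
        / ((Fintype.card W - 1).factorial : ℝ) = 1 := by
  set n := Fintype.card W with hn
  have hn2 : 2 ≤ n := Fintype.one_lt_card_iff.mpr ⟨w₁, w₂, hw⟩
  set P := (Finset.univ.erase w₁).erase w₂ with hP
  have hPcard : P.card = n - 2 := by
    rw [hP, card_erase_of_mem (mem_erase.mpr ⟨(Ne.symm hw), mem_univ _⟩),
      card_erase_of_mem (mem_univ _), Finset.card_univ]
    omega
  have hterm : ∀ T ∈ P.powerset,
      (((Finset.univ \ T).card - 2).factorial * T.card.factorial : ℝ)
        / ((n - 1).factorial : ℝ)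
      = ((n - 2 - T.card).factorial * T.card.factorial : ℝ) / ((n - 1).factorial : ℝ) := by
    intro T hT
    have hTuniv : T ⊆ Finset.univ := subset_univ T
    rw [card_sdiff_of_subset hTuniv, Finset.card_univ, ← hn]
    have hTcard : T.card ≤ n - 2 := by
      have := card_le_card (mem_powerset.mp hT)
      omega
    have h3 : n - T.card - 2 = n - 2 - T.card := by omega
    rw [h3]
  rw [sum_congr rfl hterm, sum_powerset]
  have hinner : ∀ j ∈ range (P.card + 1),
      (∑ T ∈ powersetCard j P,
        ((n - 2 - T.card).factorial * T.card.factorial : ℝ) / ((n - 1).factorial : ℝ))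
      = ((n - 2).choose j : ℝ) * (((n - 2 - j).factorial * j.factorial : ℝ) / ((n - 1).factorial : ℝ)) := by
    intro j hj
    rw [sum_congr rfl (fun T hT => by rw [(mem_powersetCard.mp hT).2]), sum_const,
      card_powersetCard, hPcard, nsmul_eq_mul]
  rw [sum_congr rfl hinner, hPcard]
  have hch : ∀ j ∈ range (n - 2 + 1),
      ((n - 2).choose j : ℝ) * (((n - 2 - j).factorial * j.factorial : ℝ) / ((n - 1).factorial : ℝ))
      = ((n - 2).factorial : ℝ) / ((n - 1).factorial : ℝ) := by
    intro j hj
    have hjle : j ≤ n - 2 := by simpa using Nat.lt_succ_iff.mp (mem_range.mp hj)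
    have : (n - 2).choose j * ((n - 2 - j).factorial * j.factorial) = (n - 2).factorial := by
      rw [show (n-2).choose j * ((n - 2 - j).factorial * j.factorial)
        = (n-2).choose j * j.factorial * (n - 2 - j).factorial by ring]
      exact Nat.choose_mul_factorial_mul_factorial hjle
    rw [mul_div_assoc', ← Nat.cast_mul, ← Nat.cast_mul, this]
  rw [sum_congr rfl hch, sum_const, card_range, nsmul_eq_mul]
  have hfac : (n - 1).factorial = (n - 1) * (n - 2).factorial := by
    have : n - 1 = (n - 2) + 1 := by omega
    rw [this, Nat.factorial_succ]
  rw [hfac]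
  have h2 : n - 2 + 1 = n - 1 := by omega
  rw [h2]
  have hpos : ((n - 2).factorial : ℝ) ≠ 0 := by positivity
  have hn2' : (2:ℝ) ≤ (n:ℝ) := by exact_mod_cast hn2
  have hpos2 : ((n:ℝ) - 1) ≠ 0 := by linarith
  push_cast
  field_simp
  exact div_self (Nat.cast_ne_zero.mpr (by omega))


/-- for a 2-additive Möbius measure `m` inducing the capacity `μ`, the
interaction index of distinct subcriteria `w₁, w₂` w.r.t. the induced hierarchical
capacity `μ_r(F) = μ(⋃_{w∈F} E(w))/μ(S)` (with `S = ⋃_{w∈W} E(w)`) equals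
`[ ∑_{t₁∈E(w₁), t₂∈E(w₂)} m({t₁,t₂}) ] / μ(S)`. -/
theorem interaction_hierarchical_two_additive {I W : Type*}
    [Fintype I] [DecidableEq I] [Fintype W] [DecidableEq W]
    (m : Finset I → ℝ)
    (hm0 : m ∅ = 0)
    (h2add : ∀ T : Finset I, 2 < T.card → m T = 0)
    (μ : Finset I → ℝ)
    (hμ : ∀ S : Finset I, μ S = ∑ R ∈ S.powerset, m R)
    (h1 : μ Finset.univ = 1)
    (hmono : ∀ R S : Finset I, R ⊆ S → μ R ≤ μ S)
    (E : W → Finset I)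
    (hdisj : ∀ w w' : W, w ≠ w' → Disjoint (E w) (E w'))
    (hpos : 0 < μ (Finset.univ.biUnion E))
    (w₁ w₂ : W) (hw : w₁ ≠ w₂) :
    interactionIndex
        (fun F : Finset W => μ (F.biUnion E) / μ (Finset.univ.biUnion E)) w₁ w₂
      = (∑ t₁ ∈ E w₁, ∑ t₂ ∈ E w₂, m {t₁, t₂}) / μ (Finset.univ.biUnion E) := by
  set S := Finset.univ.biUnion E with hS
  set K := ∑ t₁ ∈ E w₁, ∑ t₂ ∈ E w₂, m {t₁, t₂} with hK
  have hdiff : ∀ T ∈ ((Finset.univ.erase w₁).erase w₂).powerset,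
      μ ((insert w₁ (insert w₂ T)).biUnion E) / μ S
        - μ ((insert w₁ T).biUnion E) / μ S
        - μ ((insert w₂ T).biUnion E) / μ S
        + μ (T.biUnion E) / μ S = K / μ S := by
    intro T hT
    have hw1T : w₁ ∉ T := fun h =>
      (mem_erase.mp (mem_erase.mp (mem_powerset.mp hT h)).2).1 rfl
    have hw2T : w₂ ∉ T := fun h =>
      (mem_erase.mp (mem_powerset.mp hT h)).1 rfl
    have hAB : Disjoint (E w₁) (E w₂) := hdisj w₁ w₂ hw
    have hAU : Disjoint (E w₁) (T.biUnion E) :=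
      (disjoint_biUnion_right _ _ _).mpr
        (fun w hwT => hdisj w₁ w (fun h => hw1T (h ▸ hwT)))
    have hBU : Disjoint (E w₂) (T.biUnion E) :=
      (disjoint_biUnion_right _ _ _).mpr
        (fun w hwT => hdisj w₂ w (fun h => hw2T (h ▸ hwT)))
    have e1 : (insert w₁ (insert w₂ T)).biUnion E
        = E w₁ ∪ E w₂ ∪ T.biUnion E := by
      rw [biUnion_insert, biUnion_insert, union_assoc]
    have e2 : (insert w₁ T).biUnion E = E w₁ ∪ T.biUnion E := biUnion_insert ..
    have e3 : (insert w₂ T).biUnion E = E w₂ ∪ T.biUnion E := biUnion_insert ..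
    rw [e1, e2, e3, div_sub_div_same, div_sub_div_same, ← add_div]
    congr 1
    rw [hμ, hμ, hμ, hμ, hK]
    exact key_diff m h2add (E w₁) (E w₂) (T.biUnion E) hAB hAU hBU
  unfold interactionIndex
  calc ∑ T ∈ ((Finset.univ.erase w₁).erase w₂).powerset,
        (((Finset.univ \ T).card - 2).factorial * T.card.factorial : ℝ)
          / ((Fintype.card W - 1).factorial : ℝ)
          * (μ ((insert w₁ (insert w₂ T)).biUnion E) / μ S
            - μ ((insert w₁ T).biUnion E) / μ S
            - μ ((insert w₂ T).biUnion E) / μ S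
            + μ (T.biUnion E) / μ S)
      = ∑ T ∈ ((Finset.univ.erase w₁).erase w₂).powerset,
        (((Finset.univ \ T).card - 2).factorial * T.card.factorial : ℝ)
          / ((Fintype.card W - 1).factorial : ℝ) * (K / μ S) :=
        sum_congr rfl (fun T hT => by rw [hdiff T hT])
    _ = (∑ T ∈ ((Finset.univ.erase w₁).erase w₂).powerset,
        (((Finset.univ \ T).card - 2).factorial * T.card.factorial : ℝ)
          / ((Fintype.card W - 1).factorial : ℝ)) * (K / μ S) := (sum_mul ..).symm
    _ = K / μ S := by rw [coeff_sum w₁ w₂ hw, one_mul]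
end
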